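/- Let n, d ∈ ℕ with n + 1 ≤ d, let p ∈ [0, 1/2] with pn an integer, let s ∈ {−1,+1}^n have exactly pn entries equal to −1, and set η := 1 − 2p. Let k : {1,…,n} → {2,…,d} be injective and let X ∈ ℝ^{n×d} have rows xⱼ := sⱼ e₁ + e_{k(j)}. For w₀ ∈ ℝ^d, define w' := Xᵀ(XXᵀ)⁻¹(𝟙 − Xw₀) + w₀, where 𝟙 ∈ ℝ^n is the all-ones vector. Then for every coordinate i ∈ {2,…,d}: (a) if i is not in the image of k (i.e., xⱼ(i) = 0 for all j), then w'(i) = w₀(i); (b) if i = k(j) for (the unique) j =: j(i), then w'(i) = 1 + s_{j(i)}·(−nη + sᵀXw₀)/(n+1) − ⟨x_{j(i)}, w₀⟩ + w₀(i). -/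
import Mathlib


open Matrix

lemma sum_ite_ite_aux {m : ℕ} (a b : Fin m) :
    ∑ i, (if i = a then (1:ℝ) else 0) * (if i = b then 1 else 0)
      = if a = b then 1 else 0 := by
  simp [ite_mul, Finset.sum_ite_eq', eq_comm]

/-- In the setting of the structured training set (rows
`xⱼ = sⱼ e₁ + e_{k(j)}`, `sⱼ ∈ {±1}` with exactly `pn = p·n` entries `−1`, `k` injective
into `{2,…,d}`, `n + 1 ≤ d`), the interpolant `w' = Xᵀ (X Xᵀ)⁻¹ (𝟙 − X w₀) + w₀`
satisfies, for every coordinate `i` other than the first (index `0`):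
(a) if `i` is not in the image of `k`, then `w'(i) = w₀(i)`;
(b) if `i = k(j)`, then
`w'(i) = 1 + sⱼ·(−nη + sᵀ X w₀)/(n+1) − ⟨xⱼ, w₀⟩ + w₀(i)`, where `η = 1 − 2p`. -/
theorem stmt_7 {n d : ℕ} (hnd : n + 1 ≤ d) (p : ℝ) (hp0 : 0 ≤ p) (hp : p ≤ 1 / 2)
    (pn : ℕ) (hpn : (pn : ℝ) = p * n)
    (s : Fin n → ℝ) (hs : ∀ j, s j = 1 ∨ s j = -1)
    (hcard : (Finset.univ.filter fun j => s j = -1).card = pn)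
    (k : Fin n → Fin d) (hkinj : Function.Injective k) (hk1 : ∀ j, 1 ≤ (k j : ℕ))
    (X : Matrix (Fin n) (Fin d) ℝ)
    (hX : ∀ j, (X j : Fin d → ℝ) =
      s j • (Pi.single (⟨0, by omega⟩ : Fin d) 1 : Fin d → ℝ) +
        (Pi.single (k j) 1 : Fin d → ℝ))
    (w₀ : Fin d → ℝ) (η : ℝ) (hη : η = 1 - 2 * p) :
    let w' := Xᵀ *ᵥ ((X * Xᵀ)⁻¹ *ᵥ ((1 : Fin n → ℝ) - X *ᵥ w₀)) + w₀
    ∀ i : Fin d, (i : ℕ) ≠ 0 →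
      ((∀ j, k j ≠ i) → w' i = w₀ i) ∧
      (∀ j, k j = i →
        w' i = 1 + s j * ((-(n : ℝ) * η + s ⬝ᵥ (X *ᵥ w₀)) / ((n : ℝ) + 1)) -
          (X j : Fin d → ℝ) ⬝ᵥ w₀ + w₀ i) := by
  intro w' i hi
  classical
  set z : Fin d := ⟨0, by omega⟩ with hzdef
  have hn1 : (n : ℝ) + 1 ≠ 0 := by positivity
  have hs2 : ∀ j, s j * s j = 1 := by
    intro j; rcases hs j with h | h <;> rw [h] <;> ring
  have hkz : ∀ j, k j ≠ z := by
    intro j h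
    have h1 := hk1 j
    have : (k j : ℕ) = 0 := by rw [h]
    omega
  have hiz : i ≠ z := by
    intro h
    apply hi
    rw [h]
  have hXe : ∀ j i', X j i' = s j * (if i' = z then 1 else 0) + (if i' = k j then 1 else 0) := by
    intro j i'
    have h := congrFun (hX j) i'
    simpa [Pi.single_apply] using h
  -- the rank-one matrix s sᵀ
  set M : Matrix (Fin n) (Fin n) ℝ := Matrix.of fun j l => s j * s l with hM
  have hA : ∀ j l, (X * Xᵀ) j l = (if j = l then 1 else 0) + s j * s l := by
    intro j l
    rw [Matrix.mul_apply]
    have hterm : ∀ i', X j i' * Xᵀ i' l =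
        s j * s l * ((if i' = z then 1 else 0) * (if i' = z then 1 else 0)) +
        s j * ((if i' = z then 1 else 0) * (if i' = k l then 1 else 0)) +
        s l * ((if i' = k j then 1 else 0) * (if i' = z then 1 else 0)) +
        (if i' = k j then 1 else 0) * (if i' = k l then 1 else 0) := by
      intro i'
      rw [Matrix.transpose_apply, hXe j i', hXe l i']
      ring
    rw [Finset.sum_congr rfl fun i' _ => hterm i']
    rw [Finset.sum_add_distrib, Finset.sum_add_distrib, Finset.sum_add_distrib,
      ← Finset.mul_sum, ← Finset.mul_sum, ← Finset.mul_sum,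
      sum_ite_ite_aux, sum_ite_ite_aux, sum_ite_ite_aux, sum_ite_ite_aux]
    have h1 : (if z = k l then (1:ℝ) else 0) = 0 := by simp [(hkz l).symm, Ne.symm (hkz l)]
    have h2 : (if k j = z then (1:ℝ) else 0) = 0 := by simp [hkz j]
    have h3 : (if k j = k l then (1:ℝ) else 0) = if j = l then 1 else 0 := by
      simp [hkinj.eq_iff]
    rw [h1, h2, h3]
    simp
    ring
  have hAeq : X * Xᵀ = 1 + M := by
    ext j l
    rw [hA]
    simp [Matrix.one_apply, hM]
  have hMM : M * M = (n : ℝ) • M := by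
    ext j m
    rw [Matrix.mul_apply]
    simp only [hM, Matrix.of_apply, Matrix.smul_apply, smul_eq_mul]
    calc ∑ l, s j * s l * (s l * s m) = ∑ l : Fin n, s j * s m := by
          refine Finset.sum_congr rfl fun l _ => ?_
          linear_combination (s j * s m) * hs2 l
      _ = (n : ℝ) * (s j * s m) := by
          rw [Finset.sum_const, Finset.card_univ, Fintype.card_fin]
          simp [nsmul_eq_mul]
  set B : Matrix (Fin n) (Fin n) ℝ := 1 - ((n:ℝ)+1)⁻¹ • M with hB
  have hc : ((n:ℝ)+1)⁻¹ * ((n:ℝ)+1) = 1 := inv_mul_cancel₀ hn1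
  have hAB : (X * Xᵀ) * B = 1 := by
    rw [hAeq, hB]
    calc (1 + M) * (1 - ((n:ℝ)+1)⁻¹ • M)
        = (1 + M) - ((n:ℝ)+1)⁻¹ • ((1 + M) * M) := by
          rw [mul_sub, mul_one, Matrix.mul_smul]
      _ = (1 + M) - ((n:ℝ)+1)⁻¹ • (M + (n:ℝ) • M) := by rw [add_mul, one_mul, hMM]
      _ = (1 + M) - ((n:ℝ)+1)⁻¹ • ((((n:ℝ)+1)) • M) := by
          congr 1
          module
      _ = (1 + M) - M := by rw [smul_smul, hc, one_smul]
      _ = 1 := by abel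
  have hBinv : (X * Xᵀ)⁻¹ = B := Matrix.inv_eq_right_inv hAB
  set u : Fin n → ℝ := (1 : Fin n → ℝ) - X *ᵥ w₀ with hu
  have hue : ∀ j, u j = 1 - (X j : Fin d → ℝ) ⬝ᵥ w₀ := by
    intro j
    simp [hu, Matrix.mulVec, dotProduct]
  -- sum of s
  have hcards : pn + (Finset.univ.filter fun j => ¬ s j = -1).card = n := by
    rw [← hcard, Finset.card_filter_add_card_filter_not]
    simp
  have hsum : ∑ l, s l = (n : ℝ) - 2 * pn := by
    rw [← Finset.sum_filter_add_sum_filter_not Finset.univ (fun j => s j = -1)]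
    have ha : ∑ l ∈ Finset.univ.filter (fun j => s j = -1), s l = -(pn:ℝ) := by
      calc ∑ l ∈ Finset.univ.filter (fun j => s j = -1), s l
          = ∑ _l ∈ Finset.univ.filter (fun j => s j = -1), (-1 : ℝ) :=
            Finset.sum_congr rfl fun l hl => (Finset.mem_filter.mp hl).2
        _ = -(pn:ℝ) := by rw [Finset.sum_const, hcard]; simp
    have hb : ∑ l ∈ Finset.univ.filter (fun j => ¬ s j = -1), s l =
        ((Finset.univ.filter fun j => ¬ s j = -1).card : ℝ) := by
      calc ∑ l ∈ Finset.univ.filter (fun j => ¬ s j = -1), s l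
          = ∑ _l ∈ Finset.univ.filter (fun j => ¬ s j = -1), (1 : ℝ) := by
            refine Finset.sum_congr rfl fun l hl => ?_
            rcases hs l with h | h
            · exact h
            · exact absurd h (Finset.mem_filter.mp hl).2
        _ = _ := by rw [Finset.sum_const]; simp
    rw [ha, hb]
    have : ((Finset.univ.filter fun j => ¬ s j = -1).card : ℝ) = (n : ℝ) - pn := by
      have := hcards
      push_cast [← this]
      ring
    rw [this]
    ring
  have hsu : ∑ l, s l * u l = (n:ℝ) * η - s ⬝ᵥ (X *ᵥ w₀) := by
    have h1 : ∑ l, s l * u l = (∑ l, s l) - s ⬝ᵥ (X *ᵥ w₀) := by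
      simp only [hu, Pi.sub_apply, Pi.one_apply, mul_sub, mul_one, dotProduct]
      rw [Finset.sum_sub_distrib]
    rw [h1, hsum, hη, hpn]
    ring
  -- entries of B
  have hBe : ∀ j l, B j l = (if j = l then 1 else 0) - ((n:ℝ)+1)⁻¹ * (s j * s l) := by
    intro j l
    simp [hB, hM, Matrix.one_apply, Matrix.sub_apply, Matrix.smul_apply, smul_eq_mul]
  have hv : ∀ j, (B *ᵥ u) j = u j - ((n:ℝ)+1)⁻¹ * s j * ((n:ℝ) * η - s ⬝ᵥ (X *ᵥ w₀)) := by
    intro j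
    have : (B *ᵥ u) j = ∑ l, B j l * u l := by simp [Matrix.mulVec, dotProduct]
    rw [this]
    have hterm : ∀ l, B j l * u l =
        (if j = l then 1 else 0) * u l - ((n:ℝ)+1)⁻¹ * s j * (s l * u l) := by
      intro l; rw [hBe]; ring
    rw [Finset.sum_congr rfl fun l _ => hterm l, Finset.sum_sub_distrib, ← Finset.mul_sum, hsu]
    congr 1
    simp [ite_mul, Finset.sum_ite_eq]
  have hXTv : ∀ v : Fin n → ℝ, (Xᵀ *ᵥ v) i = ∑ j, (if i = k j then 1 else 0) * v j := by
    intro v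
    have h0 : (Xᵀ *ᵥ v) i = ∑ j, Xᵀ i j * v j := by simp [Matrix.mulVec, dotProduct]
    rw [h0]
    refine Finset.sum_congr rfl fun j _ => ?_
    rw [Matrix.transpose_apply, hXe j i]
    simp [hiz]
  have hw' : ∀ ii, w' ii = (Xᵀ *ᵥ (B *ᵥ u)) ii + w₀ ii := by
    intro ii
    show (Xᵀ *ᵥ ((X * Xᵀ)⁻¹ *ᵥ u) + w₀) ii = _
    rw [hBinv]
    rfl
  constructor
  · intro hnotin
    rw [hw' i, hXTv]
    have : ∀ j : Fin n, (if i = k j then (1:ℝ) else 0) * (B *ᵥ u) j = 0 := by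
      intro j
      rw [if_neg (fun h => hnotin j h.symm)]
      ring
    rw [Finset.sum_congr rfl fun j _ => this j]
    simp
  · intro j hj
    rw [hw' i, hXTv]
    have hsingle : ∑ j', (if i = k j' then (1:ℝ) else 0) * (B *ᵥ u) j' = (B *ᵥ u) j := by
      rw [Fintype.sum_eq_single j]
      · rw [if_pos hj.symm, one_mul]
      · intro j' hj'
        rw [if_neg, zero_mul]
        intro h
        exact hj' (hkinj (h.symm.trans hj.symm))
    rw [hsingle, hv, hue]
    field_simp
    ring
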